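/- arXiv:2108.01700 — 3 statements merged into one kernel-verified Lean document; each statement's English description precedes it below -/
import Mathlib

section
/- For every μ > 0, the matrices μ⁻¹D⁻¹ + Iinv and Φ_μ := μ⁻¹D⁻¹ + S are invertible, and the scalar z(μ) := eᵀ(μ⁻¹D⁻¹ + Iinv)⁻¹e satisfies the Sherman–Morrison identity z(μ) = 2 − 4/(2 + γ(μ)), where γ(μ) := eᵀ Φ_μ⁻¹ e. -/
open Matrix

/-- The sinc integrand `sin(πt)/(πt)`, extended by the value 1 at `t = 0`. -/
noncomputable def sincFn (t : ℝ) : ℝ :=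
  if t = 0 then 1 else Real.sin (Real.pi * t) / (Real.pi * t)

/-- The `m × m` Toeplitz matrix `Iinv(k,l) = 1/2 + ∫₀^{k-l} sin(πt)/(πt) dt`. -/
noncomputable def IinvMat (m : ℕ) : Matrix (Fin m) (Fin m) ℝ :=
  fun k l => 1 / 2 + ∫ t in (0 : ℝ)..((k : ℝ) - (l : ℝ)), sincFn t

/-- The skew-symmetric part `S = (Iinv - Iinvᵀ)/2`. -/
noncomputable def Smat (m : ℕ) : Matrix (Fin m) (Fin m) ℝ :=
  (2 : ℝ)⁻¹ • (IinvMat m - (IinvMat m)ᵀ)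

/-- The all-ones vector `e ∈ ℝ^m`. -/
def eVec (m : ℕ) : Fin m → ℝ := fun _ => 1

lemma sincFn_even (t : ℝ) : sincFn (-t) = sincFn t := by
  unfold sincFn
  rcases eq_or_ne t 0 with h | h
  · simp [h]
  · rw [if_neg (neg_ne_zero.mpr h), if_neg h, mul_neg, Real.sin_neg, neg_div_neg_eq]

lemma integral_sinc_neg (c : ℝ) :
    (∫ t in (0:ℝ)..(-c), sincFn t) = -∫ t in (0:ℝ)..c, sincFn t := by
  have h : (∫ x in (-c)..(0:ℝ), sincFn x) = ∫ x in (0:ℝ)..c, sincFn x := by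
    have h0 := intervalIntegral.integral_comp_neg sincFn (a := -c) (b := 0)
    simp only [sincFn_even, neg_neg, neg_zero] at h0
    exact h0
  rw [intervalIntegral.integral_symm (-c) 0, h]

/-- Entrywise: `S k l = Iinv k l - 1/2`. -/
lemma Smat_apply (m : ℕ) (k l : Fin m) : Smat m k l = IinvMat m k l - 1/2 := by
  have h : ((l : ℝ) - (k : ℝ)) = -((k : ℝ) - (l : ℝ)) := by ring
  simp only [Smat, IinvMat, Matrix.smul_apply, Matrix.sub_apply, Matrix.transpose_apply, h,
    integral_sinc_neg, smul_eq_mul]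
  ring

lemma Smat_transpose (m : ℕ) : (Smat m)ᵀ = -Smat m := by
  unfold Smat
  rw [Matrix.transpose_smul, Matrix.transpose_sub, Matrix.transpose_transpose]
  ext k l
  simp
  ring

/-- The quadratic form of the skew part vanishes. -/
lemma dot_Smat (m : ℕ) (v : Fin m → ℝ) : v ⬝ᵥ (Smat m) *ᵥ v = 0 := by
  have h1 : v ⬝ᵥ (Smat m) *ᵥ v = ((Smat m)ᵀ *ᵥ v) ⬝ᵥ v := by
    rw [Matrix.dotProduct_mulVec, Matrix.mulVec_transpose]
  rw [Smat_transpose, Matrix.neg_mulVec, neg_dotProduct,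
    dotProduct_comm (Smat m *ᵥ v) v] at h1
  linarith

lemma diag_inv_eq (m : ℕ) (d : Fin m → ℝ) (hd : ∀ j, 0 < d j) :
    (Matrix.diagonal d)⁻¹ = Matrix.diagonal (fun j => (d j)⁻¹) := by
  refine Matrix.inv_eq_right_inv ?_
  rw [Matrix.diagonal_mul_diagonal]
  have h : (fun j => d j * (d j)⁻¹) = fun _ => (1:ℝ) :=
    funext fun j => mul_inv_cancel₀ (hd j).ne'
  rw [h, Matrix.diagonal_one]

lemma dot_diag_eq (m : ℕ) (d : Fin m → ℝ) (hd : ∀ j, 0 < d j) (μ : ℝ)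
    (v : Fin m → ℝ) :
    v ⬝ᵥ (μ⁻¹ • (Matrix.diagonal d)⁻¹) *ᵥ v = μ⁻¹ * ∑ j, (d j)⁻¹ * (v j)^2 := by
  rw [diag_inv_eq m d hd, Matrix.smul_mulVec,
    dotProduct_smul, smul_eq_mul]
  congr 1
  rw [dotProduct]
  refine Finset.sum_congr rfl fun j _ => ?_
  rw [Matrix.mulVec_diagonal]
  ring

lemma dot_diag_nonneg (m : ℕ) (d : Fin m → ℝ) (hd : ∀ j, 0 < d j) (μ : ℝ) (hμ : 0 < μ)
    (v : Fin m → ℝ) : 0 ≤ v ⬝ᵥ (μ⁻¹ • (Matrix.diagonal d)⁻¹) *ᵥ v := by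
  rw [dot_diag_eq m d hd]
  refine mul_nonneg (by positivity) (Finset.sum_nonneg fun j _ => ?_)
  have := (hd j).le
  positivity

lemma dot_diag_pos (m : ℕ) (d : Fin m → ℝ) (hd : ∀ j, 0 < d j) (μ : ℝ) (hμ : 0 < μ)
    (v : Fin m → ℝ) (hv : v ≠ 0) : 0 < v ⬝ᵥ (μ⁻¹ • (Matrix.diagonal d)⁻¹) *ᵥ v := by
  rw [dot_diag_eq m d hd]
  refine mul_pos (by positivity) ?_
  obtain ⟨j, hj⟩ : ∃ j, v j ≠ 0 := by
    by_contra h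
    push_neg at h
    exact hv (funext h)
  refine Finset.sum_pos' (fun i _ => by have := (hd i).le; positivity) ⟨j, Finset.mem_univ j, ?_⟩
  have h1 := hd j
  positivity

/-- Invertibility from positive definiteness of the quadratic form. -/
lemma isUnit_of_posdef {m : ℕ} (A : Matrix (Fin m) (Fin m) ℝ)
    (h : ∀ v : Fin m → ℝ, v ≠ 0 → 0 < v ⬝ᵥ A *ᵥ v) : IsUnit A := by
  rw [Matrix.isUnit_iff_isUnit_det, isUnit_iff_ne_zero]
  intro hdet
  obtain ⟨v, hv, hAv⟩ := Matrix.exists_mulVec_eq_zero_iff.mpr hdet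
  have := h v hv
  rw [hAv] at this
  simp at this

theorem stmt3 (m : ℕ) (d : Fin m → ℝ) (hd : ∀ j, 0 < d j) (μ : ℝ) (hμ : 0 < μ) :
    let D : Matrix (Fin m) (Fin m) ℝ := Matrix.diagonal d
    let Φ : Matrix (Fin m) (Fin m) ℝ := μ⁻¹ • D⁻¹ + Smat m
    IsUnit (μ⁻¹ • D⁻¹ + IinvMat m) ∧ IsUnit Φ ∧
      eVec m ⬝ᵥ (μ⁻¹ • D⁻¹ + IinvMat m)⁻¹.mulVec (eVec m) =
        2 - 4 / (2 + eVec m ⬝ᵥ Φ⁻¹.mulVec (eVec m)) := by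
  intro D Φ
  set B : Matrix (Fin m) (Fin m) ℝ := μ⁻¹ • D⁻¹ + IinvMat m with hBdef
  -- Iinv quadratic form: v ⬝ᵥ Iinv v = (∑ v)²/2
  have hIinvQuad : ∀ v : Fin m → ℝ, v ⬝ᵥ (IinvMat m) *ᵥ v = (∑ j, v j)^2 / 2 := by
    intro v
    have h : (IinvMat m) *ᵥ v = (Smat m) *ᵥ v + fun _ => (∑ j, v j) / 2 := by
      ext k
      simp only [Matrix.mulVec, dotProduct, Pi.add_apply]
      rw [Finset.sum_div, ← Finset.sum_add_distrib]
      refine Finset.sum_congr rfl fun l _ => ?_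
      rw [Smat_apply]
      ring
    rw [h, dotProduct_add, dot_Smat, zero_add]
    simp only [dotProduct]
    rw [← Finset.sum_mul]
    ring
  have hΦQuad : ∀ v : Fin m → ℝ, v ⬝ᵥ Φ *ᵥ v = v ⬝ᵥ (μ⁻¹ • D⁻¹) *ᵥ v := by
    intro v
    rw [Matrix.add_mulVec, dotProduct_add, dot_Smat, add_zero]
  have hΦunit : IsUnit Φ := by
    refine isUnit_of_posdef Φ fun v hv => ?_
    rw [hΦQuad]
    exact dot_diag_pos m d hd μ hμ v hv
  have hBunit : IsUnit B := by
    refine isUnit_of_posdef B fun v hv => ?_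
    rw [hBdef, Matrix.add_mulVec, dotProduct_add, hIinvQuad]
    have h1 := dot_diag_pos m d hd μ hμ v hv
    have h2 : 0 ≤ (∑ j, v j)^2 / 2 := by positivity
    linarith
  refine ⟨hBunit, hΦunit, ?_⟩
  set y : Fin m → ℝ := Φ⁻¹ *ᵥ (eVec m) with hydef
  have hΦdet : IsUnit Φ.det := (Matrix.isUnit_iff_isUnit_det Φ).mp hΦunit
  have hBdet : IsUnit B.det := (Matrix.isUnit_iff_isUnit_det B).mp hBunit
  have hy : Φ *ᵥ y = eVec m := by
    rw [hydef, Matrix.mulVec_mulVec, Matrix.mul_nonsing_inv Φ hΦdet, Matrix.one_mulVec]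
  set γ : ℝ := eVec m ⬝ᵥ y with hγdef
  have hγsum : γ = ∑ j, y j := by
    rw [hγdef, dotProduct]; simp [eVec]
  have hγnonneg : 0 ≤ γ := by
    have h1 : γ = y ⬝ᵥ Φ *ᵥ y := by
      rw [hγdef, ← hy, dotProduct_comm]
    rw [h1, hΦQuad]
    exact dot_diag_nonneg m d hd μ hμ y
  have hc : (0:ℝ) < 1 + γ/2 := by linarith
  set c : ℝ := (1 + γ/2)⁻¹ with hcdef
  -- B *ᵥ (c • y) = e
  have hBy : B *ᵥ (c • y) = eVec m := by
    have hBy' : B *ᵥ y = eVec m + fun _ => γ/2 := by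
      have h : (IinvMat m) *ᵥ y = (Smat m) *ᵥ y + fun _ => γ/2 := by
        ext k
        simp only [Matrix.mulVec, dotProduct, Pi.add_apply]
        rw [hγsum, Finset.sum_div, ← Finset.sum_add_distrib]
        refine Finset.sum_congr rfl fun l _ => ?_
        rw [Smat_apply]
        ring
      calc B *ᵥ y = (μ⁻¹ • D⁻¹) *ᵥ y + (IinvMat m) *ᵥ y := Matrix.add_mulVec _ _ y
        _ = (μ⁻¹ • D⁻¹) *ᵥ y + ((Smat m) *ᵥ y + fun _ => γ/2) := by rw [h]
        _ = ((μ⁻¹ • D⁻¹) *ᵥ y + (Smat m) *ᵥ y) + fun _ => γ/2 := by ring_nf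
        _ = Φ *ᵥ y + fun _ => γ/2 := by rw [← Matrix.add_mulVec]
        _ = eVec m + fun _ => γ/2 := by rw [hy]
    rw [Matrix.mulVec_smul, hBy']
    ext k
    simp only [Pi.smul_apply, Pi.add_apply, eVec, smul_eq_mul]
    rw [hcdef]
    field_simp
  have hx : B⁻¹ *ᵥ (eVec m) = c • y := by
    rw [← hBy, Matrix.mulVec_mulVec, Matrix.nonsing_inv_mul B hBdet, Matrix.one_mulVec]
  rw [hx]
  rw [dotProduct_smul, ← hγdef, smul_eq_mul, hcdef]
  have h2γ : (2:ℝ) + γ ≠ 0 := by linarith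
  have h1γ : (1:ℝ) + γ/2 ≠ 0 := ne_of_gt hc
  field_simp
  ring
end

section
/- (Lemma 3.2) For every μ > 0, the matrix μ⁻¹D⁻¹ + Iinv is invertible and the scalar z(μ) := eᵀ(μ⁻¹D⁻¹ + Iinv)⁻¹e is a real number lying in the interval [0, 2). -/
open Matrix

lemma Iinv_add_symm (m : ℕ) (k l : Fin m) :
    IinvMat m k l + IinvMat m l k = 1 := by
  unfold IinvMat
  have h := intervalIntegral.integral_comp_neg (a := (0 : ℝ)) (b := (k : ℝ) - (l : ℝ))
    (f := sincFn)
  simp only [sincFn_even, neg_zero, neg_sub] at h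
  have h3 : (∫ t in ((l:ℝ) - (k:ℝ))..0, sincFn t)
      = - ∫ t in (0:ℝ)..((l:ℝ) - (k:ℝ)), sincFn t := intervalIntegral.integral_symm 0 _
  rw [h3] at h
  have h2 : (∫ t in (0:ℝ)..((l:ℝ) - (k:ℝ)), sincFn t)
      = - ∫ t in (0:ℝ)..((k:ℝ) - (l:ℝ)), sincFn t := by linarith
  rw [h2]; ring

lemma quad_Iinv (m : ℕ) (x : Fin m → ℝ) :
    2 * (x ⬝ᵥ (IinvMat m).mulVec x) = (∑ j, x j) ^ 2 := by
  have expand : x ⬝ᵥ (IinvMat m).mulVec x = ∑ k, ∑ l, x k * (IinvMat m k l * x l) := by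
    simp [dotProduct, Matrix.mulVec, Finset.mul_sum]
  have swap : ∑ k, ∑ l, x k * (IinvMat m k l * x l)
      = ∑ k, ∑ l, x l * (IinvMat m l k * x k) := Finset.sum_comm
  calc 2 * (x ⬝ᵥ (IinvMat m).mulVec x)
      = (∑ k, ∑ l, x k * (IinvMat m k l * x l))
        + ∑ k, ∑ l, x l * (IinvMat m l k * x k) := by rw [expand, ← swap]; ring
    _ = ∑ k, ∑ l, x k * x l * (IinvMat m k l + IinvMat m l k) := by
        rw [← Finset.sum_add_distrib]
        refine Finset.sum_congr rfl fun k _ => ?_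
        rw [← Finset.sum_add_distrib]
        exact Finset.sum_congr rfl fun l _ => by ring
    _ = ∑ k, ∑ l, x k * x l := by
        refine Finset.sum_congr rfl fun k _ => Finset.sum_congr rfl fun l _ => ?_
        rw [Iinv_add_symm, mul_one]
    _ = (∑ j, x j) ^ 2 := by rw [sq, Finset.sum_mul_sum]

theorem stmt4 (m : ℕ) (d : Fin m → ℝ) (hd : ∀ j, 0 < d j) (μ : ℝ) (hμ : 0 < μ) :
    let D : Matrix (Fin m) (Fin m) ℝ := Matrix.diagonal d
    IsUnit (μ⁻¹ • D⁻¹ + IinvMat m) ∧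
      eVec m ⬝ᵥ (μ⁻¹ • D⁻¹ + IinvMat m)⁻¹.mulVec (eVec m) ∈ Set.Ico (0 : ℝ) 2 := by
  intro D
  set A : Matrix (Fin m) (Fin m) ℝ := μ⁻¹ • D⁻¹ + IinvMat m with hA
  have hDinv : D⁻¹ = Matrix.diagonal (fun i => (d i)⁻¹) := by
    apply Matrix.inv_eq_right_inv
    rw [Matrix.diagonal_mul_diagonal,
      show (fun i => d i * (d i)⁻¹) = fun _ => (1:ℝ) from
        funext fun i => mul_inv_cancel₀ (hd i).ne', Matrix.diagonal_one]
  -- the quadratic form of A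
  have hquad : ∀ x : Fin m → ℝ, x ⬝ᵥ A.mulVec x
      = μ⁻¹ * (∑ j, (d j)⁻¹ * x j ^ 2) + (∑ j, x j) ^ 2 / 2 := by
    intro x
    have hDq : x ⬝ᵥ ((μ⁻¹ • D⁻¹).mulVec x) = μ⁻¹ * ∑ j, (d j)⁻¹ * x j ^ 2 := by
      rw [hDinv, Matrix.smul_mulVec]
      simp only [dotProduct, Pi.smul_apply, Matrix.mulVec_diagonal, smul_eq_mul,
        Finset.mul_sum]
      exact Finset.sum_congr rfl fun j _ => by ring
    have hIq := quad_Iinv m x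
    rw [hA, Matrix.add_mulVec, dotProduct_add, hDq]
    linarith
  have hnonneg : ∀ x : Fin m → ℝ, 0 ≤ ∑ j, (d j)⁻¹ * x j ^ 2 := fun x =>
    Finset.sum_nonneg fun i _ => mul_nonneg (inv_nonneg.2 (hd i).le) (sq_nonneg _)
  have hpos : ∀ x : Fin m → ℝ, x ≠ 0 → 0 < x ⬝ᵥ A.mulVec x := by
    intro x hx
    rw [hquad]
    obtain ⟨j, hj⟩ : ∃ j, x j ≠ 0 := by
      by_contra h; push_neg at h; exact hx (funext h)
    have h1 : 0 < ∑ j, (d j)⁻¹ * x j ^ 2 := by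
      refine Finset.sum_pos' (fun i _ => mul_nonneg (inv_nonneg.2 (hd i).le) (sq_nonneg _))
        ⟨j, Finset.mem_univ j, ?_⟩
      have : 0 < x j ^ 2 := by positivity
      exact mul_pos (inv_pos.2 (hd j)) this
    have h2 : 0 ≤ (∑ j, x j) ^ 2 / 2 := by positivity
    have := mul_pos (inv_pos.2 hμ) h1
    linarith
  have hdet : A.det ≠ 0 := by
    intro h
    obtain ⟨v, hv, hAv⟩ := Matrix.exists_mulVec_eq_zero_iff.mpr h
    have := hpos v hv
    rw [hAv] at this
    simp at this
  have hdetU : IsUnit A.det := isUnit_iff_ne_zero.mpr hdet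
  have hUnit : IsUnit A := (Matrix.isUnit_iff_isUnit_det A).mpr hdetU
  refine ⟨hUnit, ?_⟩
  set x : Fin m → ℝ := A⁻¹.mulVec (eVec m) with hx
  have hAx : A.mulVec x = eVec m := by
    rw [hx, Matrix.mulVec_mulVec, Matrix.mul_nonsing_inv A hdetU, Matrix.one_mulVec]
  set z : ℝ := eVec m ⬝ᵥ x with hzdef
  have hz1 : z = ∑ j, x j := by simp [hzdef, eVec, dotProduct]
  have hz2 : z = x ⬝ᵥ A.mulVec x := by rw [hAx, hzdef, dotProduct_comm]
  have hkey : z = μ⁻¹ * (∑ j, (d j)⁻¹ * x j ^ 2) + z ^ 2 / 2 := by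
    have h := hquad x
    rw [← hz1] at h
    rw [← hz2] at h
    exact h
  have hc : 0 ≤ ∑ j, (d j)⁻¹ * x j ^ 2 := hnonneg x
  have hμc : 0 ≤ μ⁻¹ * ∑ j, (d j)⁻¹ * x j ^ 2 := mul_nonneg (inv_pos.2 hμ).le hc
  constructor
  · nlinarith [sq_nonneg z]
  · by_contra hge
    push_neg at hge
    have h1 : μ⁻¹ * (∑ j, (d j)⁻¹ * x j ^ 2) ≤ 0 := by nlinarith
    have h2 : (∑ j, (d j)⁻¹ * x j ^ 2) = 0 := by
      by_contra hne
      have hcpos : 0 < ∑ j, (d j)⁻¹ * x j ^ 2 := lt_of_le_of_ne hc (Ne.symm hne)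
      nlinarith [mul_pos (inv_pos.2 hμ) hcpos]
    have hx0 : ∀ j, x j = 0 := by
      intro j
      have h3 := (Finset.sum_eq_zero_iff_of_nonneg
        (fun i _ => mul_nonneg (inv_nonneg.2 (hd i).le) (sq_nonneg (x i)))).mp h2 j
        (Finset.mem_univ j)
      have hdj : (d j)⁻¹ ≠ 0 := (inv_pos.2 (hd j)).ne'
      have h4 := (mul_eq_zero.mp h3).resolve_left hdj
      exact pow_eq_zero_iff (two_ne_zero) |>.mp h4
    have hz0 : z = 0 := by rw [hz1]; exact Finset.sum_eq_zero fun j _ => hx0 j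
    linarith
end

section
/- Let ω ∈ (0,1) and let z ∈ ℂ satisfy |z − 1| = 1. Then 2 − ωz ≠ 0 and ω/(2−ω) ≤ |2/(2 − ωz) − 2/(2 − ω)| ≤ ω/((2−ω)(1−ω)); that is, 2/(2 − ωz) lies in the closed annulus centered at 2/(2−ω) with inner radius ω/(2−ω) and outer radius ω/((2−ω)(1−ω)). -/
/-! With `u = 2 - ωz` and `v = 2 - ω`, the point `u` lies on the circle of radius `ω` about `v`,
so `2 - 2ω ≤ ‖u‖ ≤ 2` by the triangle inequality, while `‖2/u - 2/v‖ = 2ω / (‖u‖ ‖v‖)`. -/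

open Set

lemma dist_inv_inv_mem_Icc_of_dist_eq {𝕜 : Type*} [NormedField 𝕜] {u v : 𝕜} {r : ℝ}
    (huv : dist u v = r) (hr : r < ‖v‖) :
    u ≠ 0 ∧ dist u⁻¹ v⁻¹ ∈ Icc (r / ((‖v‖ + r) * ‖v‖)) (r / ((‖v‖ - r) * ‖v‖)) := by
  have hr0 : 0 ≤ r := huv ▸ dist_nonneg
  have hlow : ‖v‖ - r ≤ ‖u‖ := by
    have := norm_sub_norm_le v u
    rw [← dist_eq_norm, dist_comm, huv] at this
    linarith
  have hup : ‖u‖ ≤ ‖v‖ + r := by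
    have := norm_sub_norm_le u v
    rw [← dist_eq_norm, huv] at this
    linarith
  have hu : u ≠ 0 := norm_pos_iff.mp (by linarith)
  have hv : v ≠ 0 := norm_pos_iff.mp (by linarith)
  rw [dist_inv_inv₀ hu hv, huv]
  refine ⟨hu, ?_, ?_⟩ <;> gcongr

theorem stmt12 (ω : ℝ) (hω : ω ∈ Set.Ioo (0 : ℝ) 1) (z : ℂ)
    (hz : ‖z - 1‖ = 1) :
    (2 - (ω : ℂ) * z ≠ 0) ∧
    ω / (2 - ω) ≤ ‖2 / (2 - (ω : ℂ) * z) - 2 / (2 - (ω : ℂ))‖ ∧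
    ‖2 / (2 - (ω : ℂ) * z) - 2 / (2 - (ω : ℂ))‖ ≤ ω / ((2 - ω) * (1 - ω)) := by
  obtain ⟨hω0, hω1⟩ := hω
  have hv : ‖2 - (ω : ℂ)‖ = 2 - ω := by
    rw [show (2 - ω : ℂ) = ((2 - ω : ℝ) : ℂ) by push_cast; rfl, Complex.norm_real,
      Real.norm_of_nonneg (by linarith)]
  have huv : dist (2 - (ω : ℂ) * z) (2 - ω) = ω := by
    rw [dist_eq_norm, show 2 - (ω : ℂ) * z - (2 - ω) = -(ω * (z - 1)) by ring, norm_neg,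
      norm_mul, hz, Complex.norm_real, Real.norm_of_nonneg hω0.le, mul_one]
  obtain ⟨hu, hlow, hup⟩ := dist_inv_inv_mem_Icc_of_dist_eq huv (by linarith)
  have hdiff : ‖2 / (2 - (ω : ℂ) * z) - 2 / (2 - (ω : ℂ))‖
      = 2 * dist (2 - (ω : ℂ) * z)⁻¹ (2 - (ω : ℂ))⁻¹ := by
    rw [dist_eq_norm, div_eq_mul_inv, div_eq_mul_inv, ← mul_sub, norm_mul, Complex.norm_two]
  rw [hv] at hlow hup
  refine ⟨hu, ?_, ?_⟩ <;> rw [hdiff]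
  · calc ω / (2 - ω) = 2 * (ω / ((2 - ω + ω) * (2 - ω))) := by
          field_simp [show 2 - ω ≠ 0 by linarith]; ring
      _ ≤ _ := by gcongr
  · calc _ ≤ 2 * (ω / ((2 - ω - ω) * (2 - ω))) := by gcongr
      _ = ω / ((2 - ω) * (1 - ω)) := by
          rw [show 2 - ω - ω = 2 * (1 - ω) by ring]
          field_simp [show 2 - ω ≠ 0 by linarith, show 1 - ω ≠ 0 by linarith]
end
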